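/- Let T = (t_{i−j})_{i,j=1}^n be a real positive definite Toeplitz matrix such that (T^{-1})_{k,1} = 0 for all k ∈ {3,...,n−1}. Write the first column of T^{-1} as (a, c, 0, ..., 0, d)^T. Then T^{-1} is the symmetric pentadiagonal-plus-corners matrix with diagonal entries (a, b, b, ..., b, a), entries c at distance 1 from the diagonal, d in the corners (1,n),(n,1), zeros elsewhere, where b = (a² + c² − d²)/a. -/

import Mathlib

/-!
Write `B = T⁻¹`, `x` for its first column and `a = B₀₀`. A Toeplitz matrix is persymmetric, hence
so is `B`, and the Gohberg–Semencul formula takes the recursive form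
`a B_{i+1,j+1} = a B_{i,j} + x_{i+1} x_{j+1} - x_{n-1-i} x_{n-1-j}`.
To see it, apply `T` to the column vector of differences of the two sides: since `T` commutes
with the down-shift up to a term in its last column, the result vanishes below row `0`, so the
vector is a multiple of `x`; its top entry is `0` and `a ≠ 0`, so it vanishes. Hence `B` is
determined by its first column, and the periodic tridiagonal matrix in the statement has the same
first column and satisfies the same recurrence.
-/

open Matrix

namespace Matrix

def IsToeplitz {α : Type*} {n : ℕ} (T : Matrix (Fin n) (Fin n) α) : Prop :=
  ∀ i j i' j' : Fin n, (i : ℤ) - (j : ℤ) = (i' : ℤ) - (j' : ℤ) → T i j = T i' j'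

theorem ext_of_succ_succ {α : Type*} {m : ℕ} {F G : Matrix (Fin (m + 1)) (Fin (m + 1)) α}
    (hrow : ∀ j, F 0 j = G 0 j) (hcol : ∀ i, F i 0 = G i 0)
    (hsucc : ∀ i j : Fin m, F i.castSucc j.castSucc = G i.castSucc j.castSucc →
      F i.succ j.succ = G i.succ j.succ) :
    F = G := by
  ext i j
  induction i using Fin.induction generalizing j with
  | zero => exact hrow j
  | succ i ih =>
    cases j using Fin.cases with
    | zero => exact hcol _
    | succ j => exact hsucc i j (ih j.castSucc)

theorem eq_zero_of_mulVec_succ_eq_zero {K : Type*} [Field K] {m : ℕ}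
    {T : Matrix (Fin (m + 1)) (Fin (m + 1)) K} (hdet : IsUnit T.det) (ha : T⁻¹ 0 0 ≠ 0)
    {u : Fin (m + 1) → K} (hu : ∀ k : Fin m, (T *ᵥ u) k.succ = 0) (hu0 : u 0 = 0) :
    u = 0 := by
  have hTu : T *ᵥ u = Pi.single 0 ((T *ᵥ u) 0) := by
    ext k
    cases k using Fin.cases <;> simp [hu]
  have hu' : u = T⁻¹ *ᵥ (T *ᵥ u) := by
    rw [mulVec_mulVec, nonsing_inv_mul _ hdet, one_mulVec]
  have hTu0 : (T *ᵥ u) 0 = 0 := by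
    have := congrFun hu' 0
    rw [hTu, mulVec_single, hu0] at this
    exact (mul_eq_zero.mp this.symm).resolve_left ha
  rw [hu', hTu, hTu0, Pi.single_zero, mulVec_zero]

namespace IsToeplitz

variable {α : Type*}

theorem submatrix_rev {n : ℕ} {T : Matrix (Fin n) (Fin n) α} (hT : T.IsToeplitz) :
    T.submatrix Fin.rev Fin.rev = Tᵀ := by
  ext i j
  exact hT _ _ _ _ (by simp only [Fin.val_rev]; omega)

theorem inv_submatrix_rev [CommRing α] {n : ℕ} {T : Matrix (Fin n) (Fin n) α}
    (hT : T.IsToeplitz) : T⁻¹.submatrix Fin.rev Fin.rev = T⁻¹ᵀ :=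
  calc T⁻¹.submatrix Fin.rev Fin.rev = (T.submatrix Fin.revPerm Fin.revPerm)⁻¹ :=
        (inv_submatrix_equiv T Fin.revPerm Fin.revPerm).symm
    _ = T⁻¹ᵀ := by rw [transpose_nonsing_inv, ← hT.submatrix_rev]; rfl

theorem mulVec_cons_zero_succ [NonUnitalNonAssocSemiring α] {m : ℕ}
    {T : Matrix (Fin (m + 1)) (Fin (m + 1)) α} (hT : T.IsToeplitz) (v : Fin (m + 1) → α)
    (k : Fin m) :
    (T *ᵥ Fin.cons 0 (v ∘ Fin.castSucc)) k.succ + T k.castSucc (Fin.last m) * v (Fin.last m) =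
      (T *ᵥ v) k.castSucc := by
  rw [mulVec, mulVec, dotProduct, dotProduct, Fin.sum_univ_succ, Fin.sum_univ_castSucc]
  simp only [Fin.cons_zero, Fin.cons_succ, mul_zero, zero_add, Function.comp_apply]
  congr 2 with l
  rw [hT k.succ l.succ k.castSucc l.castSucc (by simp)]

theorem inv_succ_succ {K : Type*} [Field K] {m : ℕ} {T : Matrix (Fin (m + 1)) (Fin (m + 1)) K}
    (hT : T.IsToeplitz) (hsymm : T.IsSymm) (hdet : IsUnit T.det) (ha : T⁻¹ 0 0 ≠ 0)
    (i j : Fin m) :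
    T⁻¹ 0 0 * T⁻¹ i.succ j.succ = T⁻¹ 0 0 * T⁻¹ i.castSucc j.castSucc
      + T⁻¹ i.succ 0 * T⁻¹ j.succ 0 - T⁻¹ i.rev.succ 0 * T⁻¹ j.rev.succ 0 := by
  set B := T⁻¹
  set a := B 0 0
  have hB : ∀ i j, B j i = B i j := hsymm.inv.apply
  have hpers (i j) : B i.rev j.rev = B j i := congrFun₂ hT.inv_submatrix_rev i j
  have hlast : B (Fin.last m) (Fin.last m) = a := by simpa using hpers 0 0
  have hlastcol (i : Fin m) : B i.castSucc (Fin.last m) = B i.rev.succ 0 := by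
    rw [← hpers, Fin.rev_last, Fin.rev_castSucc, hB]
  have hTcol (i j) : (T *ᵥ fun k => B k j) i = if i = j then 1 else 0 := by
    rw [← one_apply, ← mul_nonsing_inv T hdet]; rfl
  let shift (v : Fin (m + 1) → K) : Fin (m + 1) → K := Fin.cons 0 (v ∘ Fin.castSucc)
  -- `u i.succ = 0` is the claimed identity.
  let u : Fin (m + 1) → K := a • (fun k => B k j.succ) - a • shift (fun k => B k j.castSucc)
    - B j.succ 0 • (fun k => B k 0) + B j.castSucc (Fin.last m) • shift (fun k => B k (Fin.last m))
  have hu (k : Fin m) : (T *ᵥ u) k.succ = 0 := by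
    have h1 := hT.mulVec_cons_zero_succ (fun k => B k j.castSucc) k
    have h2 := hT.mulVec_cons_zero_succ (fun k => B k (Fin.last m)) k
    simp only [u, mulVec_add, mulVec_sub, mulVec_smul, Pi.add_apply, Pi.sub_apply, Pi.smul_apply,
      smul_eq_mul, hTcol, shift, Fin.succ_inj, Fin.castSucc_inj, Fin.succ_ne_zero,
      (Fin.castSucc_lt_last k).ne, if_false, hlast, hB j.castSucc (Fin.last m)] at h1 h2 ⊢
    linear_combination (-a) * h1 + B j.castSucc (Fin.last m) * h2
  have hu0 : u 0 = 0 := by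
    simp [u, shift, hB j.succ 0, a, mul_comm]
  have hui := congrFun (eq_zero_of_mulVec_succ_eq_zero hdet ha hu hu0) i.succ
  simp only [u, shift, Pi.add_apply, Pi.sub_apply, Pi.smul_apply, smul_eq_mul, Fin.cons_succ,
    Function.comp_apply, Pi.zero_apply, hlastcol] at hui
  linear_combination hui

end IsToeplitz

section periodicTridiag

variable {K : Type*} [Field K] {m : ℕ}

def periodicTridiag (n : ℕ) (a c d : K) : Matrix (Fin n) (Fin n) K :=
  of fun i j =>
    if i = j then (if (i : ℕ) = 0 ∨ (i : ℕ) = n - 1 then a else (a ^ 2 + c ^ 2 - d ^ 2) / a)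
    else if (i : ℕ) + 1 = (j : ℕ) ∨ (j : ℕ) + 1 = (i : ℕ) then c
    else if ((i : ℕ) = 0 ∧ (j : ℕ) = n - 1) ∨ ((i : ℕ) = n - 1 ∧ (j : ℕ) = 0) then d
    else 0

theorem periodicTridiag_isSymm (n : ℕ) (a c d : K) : (periodicTridiag n a c d).IsSymm := by
  refine IsSymm.ext fun i j => ?_
  simp only [periodicTridiag, of_apply, Fin.ext_iff]
  split_ifs <;> first | rfl | omega

theorem periodicTridiag_succ_zero (hm : 2 ≤ m) (a c d : K) (i : Fin m) :
    periodicTridiag (m + 1) a c d i.succ 0 =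
      if (i : ℕ) = 0 then c else if (i : ℕ) + 1 = m then d else 0 := by
  simp only [periodicTridiag, of_apply, Fin.ext_iff, Fin.val_succ, Fin.val_zero,
    Nat.add_one_ne_zero, Nat.add_sub_cancel, ↓reduceIte, false_or, false_and, and_true, zero_add]
  split_ifs <;> first | rfl | omega

theorem periodicTridiag_succ_succ (hm : 3 ≤ m) {a : K} (ha : a ≠ 0) (c d : K) (i j : Fin m) :
    a * periodicTridiag (m + 1) a c d i.succ j.succ =
      a * periodicTridiag (m + 1) a c d i.castSucc j.castSucc
        + periodicTridiag (m + 1) a c d i.succ 0 * periodicTridiag (m + 1) a c d j.succ 0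
        - periodicTridiag (m + 1) a c d i.rev.succ 0
          * periodicTridiag (m + 1) a c d j.rev.succ 0 := by
  have hb : a * ((a ^ 2 + c ^ 2 - d ^ 2) / a) = a ^ 2 + c ^ 2 - d ^ 2 := mul_div_cancel₀ _ ha
  have hrev₁ (k : Fin m) : m - (k + 1) = 0 ↔ (k : ℕ) + 1 = m := by omega
  have hrev₂ (k : Fin m) : m - (k + 1) + 1 = m ↔ (k : ℕ) = 0 := by omega
  have hne (k : Fin m) : (k : ℕ) ≠ m := k.isLt.ne
  simp only [periodicTridiag_succ_zero (by omega : 2 ≤ m), Fin.val_rev, hrev₁, hrev₂]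
  simp only [periodicTridiag, of_apply, Fin.ext_iff, Fin.val_succ, Fin.val_castSucc,
    Nat.add_sub_cancel, Nat.add_right_cancel_iff, Nat.add_one_ne_zero, hne, false_or, false_and,
    or_false, and_false]
  split_ifs <;> first | omega | linear_combination hb | linear_combination -hb | ring

end periodicTridiag

end Matrix

theorem stmt15 {n : ℕ} (hn : 4 ≤ n) (T : Matrix (Fin n) (Fin n) ℝ)
    (hT : T.PosDef)
    (hToep : ∀ i j i' j' : Fin n, (i : ℤ) - (j : ℤ) = (i' : ℤ) - (j' : ℤ) → T i j = T i' j')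
    (hzero : ∀ k : Fin n, 2 ≤ (k : ℕ) → (k : ℕ) ≤ n - 2 → T⁻¹ k ⟨0, by omega⟩ = 0)
    (a c d : ℝ)
    (ha : a = T⁻¹ ⟨0, by omega⟩ ⟨0, by omega⟩)
    (hc : c = T⁻¹ ⟨1, by omega⟩ ⟨0, by omega⟩)
    (hd : d = T⁻¹ ⟨n - 1, by omega⟩ ⟨0, by omega⟩) :
    ∀ i j : Fin n, T⁻¹ i j =
      if i = j then (if (i : ℕ) = 0 ∨ (i : ℕ) = n - 1 then a else (a ^ 2 + c ^ 2 - d ^ 2) / a)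
      else if (i : ℕ) + 1 = (j : ℕ) ∨ (j : ℕ) + 1 = (i : ℕ) then c
      else if ((i : ℕ) = 0 ∧ (j : ℕ) = n - 1) ∨ ((i : ℕ) = n - 1 ∧ (j : ℕ) = 0) then d
      else 0 := by
  obtain ⟨m, rfl⟩ : ∃ m, n = m + 1 := ⟨n - 1, by omega⟩
  have hToep' : T.IsToeplitz := hToep
  have hdet : IsUnit T.det := isUnit_iff_ne_zero.2 hT.det_pos.ne'
  have hsymm : T.IsSymm := (conjTranspose_eq_transpose_of_trivial T).symm.trans hT.isHermitian
  have hB00 : T⁻¹ 0 0 = a := ha.symm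
  have ha_ne : a ≠ 0 := hB00 ▸ hT.inv.diag_pos.ne'
  have hcol (k : Fin (m + 1)) : T⁻¹ k 0 = periodicTridiag (m + 1) a c d k 0 := by
    cases k using Fin.cases with
    | zero => simpa [periodicTridiag] using hB00
    | succ k =>
      rw [periodicTridiag_succ_zero (by omega)]
      split_ifs with h1
      · rw [hc, show k.succ = ⟨1, by omega⟩ from Fin.ext (by simp [h1])]; rfl
      · rw [hd, show k.succ = ⟨m + 1 - 1, by omega⟩ from Fin.ext (by simp; omega)]; rfl
      · exact hzero _ (by simp; omega) (by simp; omega)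
  have hinv : T⁻¹ = periodicTridiag (m + 1) a c d := by
    refine ext_of_succ_succ (fun j => ?_) hcol fun i j hij => mul_left_cancel₀ ha_ne ?_
    · rw [← hsymm.inv.apply, hcol]; exact (periodicTridiag_isSymm _ a c d).apply 0 j
    · have hrec := hToep'.inv_succ_succ hsymm hdet (hB00 ▸ ha_ne) i j
      rw [hB00] at hrec
      simp only [hcol] at hrec
      rw [hrec, periodicTridiag_succ_succ (by omega) ha_ne, hij]
  intro i j
  rw [hinv]
  rfl
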